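/- For seven vectors v1,...,v7 ∈ F⁴ in general position, setting x = (13|2764) and y = (12|3754), with x ≠ 1 and all relevant determinants nonzero, one has (12|3574)/(13|2674) = (1 − y)/(1 − x). -/

import Mathlib

def det4 {F : Type*} [Field F] (u v w x : Fin 4 → F) : F :=
  Matrix.det (Matrix.of fun i j => ![u, v, w, x] j i)
/-- Projected cross ratio (i1 i2 | i3 i4 i5 i6). -/
def pcr {F : Type*} [Field F] (a b c d e f : Fin 4 → F) : F :=
  det4 a b c e * det4 a b d f / (det4 a b c f * det4 a b d e)

/-!
With `a, b` fixed, `(c, d) ↦ det4 a b c d` is an alternating bilinear form that factors through the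
two-dimensional quotient `F⁴ ⧸ ⟨a, b⟩`, so it satisfies the three-term Plücker relation `[cd][ef] - [ce][df] + [cf][de] = 0`. Dividing by `[cf][de]` gives
`1 - (ab|cdef) = (ab|cedf)`; applied to `x` and `y` this rewrites the right-hand side into the
left-hand side.
-/

theorem det4_swap_right {F : Type*} [Field F] (a b c d : Fin 4 → F) :
    det4 a b d c = -det4 a b c d := by
  have h := Matrix.det_permute' (Equiv.swap (2 : Fin 4) 3)
    (Matrix.of fun i j => ![a, b, c, d] j i)
  rw [Equiv.Perm.sign_swap (by decide)] at h
  simp only [det4]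
  convert h using 2
  · ext i j; fin_cases j <;> rfl
  · simp

theorem det4_plucker {F : Type*} [Field F] (a b c d e f : Fin 4 → F) :
    det4 a b c d * det4 a b e f - det4 a b c e * det4 a b d f
      + det4 a b c f * det4 a b d e = 0 := by
  simp [det4, Matrix.det_succ_column_zero, Fin.sum_univ_succ, Fin.succAbove]
  ring

theorem one_sub_pcr {F : Type*} [Field F] {a b c d e f : Fin 4 → F}
    (hcf : det4 a b c f ≠ 0) (hde : det4 a b d e ≠ 0) :
    1 - pcr a b c d e f = pcr a b c e d f := by
  unfold pcr
  rw [det4_swap_right a b d e]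
  field_simp
  linear_combination det4_plucker a b c d e f

theorem stmt17_general {F : Type*} [Field F] (v : Fin 7 → Fin 4 → F)
    (hgen : ∀ i j k l : Fin 7, i ≠ j → i ≠ k → i ≠ l → j ≠ k → j ≠ l → k ≠ l →
      det4 (v i) (v j) (v k) (v l) ≠ 0) :
    pcr (v 0) (v 1) (v 2) (v 4) (v 6) (v 3)
        / pcr (v 0) (v 2) (v 1) (v 5) (v 6) (v 3)
      = (1 - pcr (v 0) (v 1) (v 2) (v 6) (v 4) (v 3))
        / (1 - pcr (v 0) (v 2) (v 1) (v 6) (v 5) (v 3)) := by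
  rw [one_sub_pcr (by apply hgen <;> decide) (by apply hgen <;> decide),
    one_sub_pcr (by apply hgen <;> decide) (by apply hgen <;> decide)]

theorem stmt17 {F : Type*} [Field F] (v : Fin 7 → Fin 4 → F)
    (hgen : ∀ i j k l : Fin 7, i ≠ j → i ≠ k → i ≠ l → j ≠ k → j ≠ l → k ≠ l →
      det4 (v i) (v j) (v k) (v l) ≠ 0)
    (hx1 : pcr (v 0) (v 2) (v 1) (v 6) (v 5) (v 3) ≠ 1) :
    pcr (v 0) (v 1) (v 2) (v 4) (v 6) (v 3)
        / pcr (v 0) (v 2) (v 1) (v 5) (v 6) (v 3)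
      = (1 - pcr (v 0) (v 1) (v 2) (v 6) (v 4) (v 3))
        / (1 - pcr (v 0) (v 2) (v 1) (v 6) (v 5) (v 3)) :=
  stmt17_general v hgen
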